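/- For any vector Ψ in the probability simplex on D coordinates (Ψ_d ≥ 0, ∑ Ψ_d = 1) and any δ > 0, the surrogate sparsity measure satisfies 1 ≤ ∑_{d=1}^D (1/δ) ln(1 + (e^δ − 1) Ψ_d) ≤ ‖Ψ‖_0, where ‖Ψ‖_0 is the number of nonzero coordinates of Ψ. -/

import Mathlib

/-!
Write `g δ x = δ⁻¹ log (1 + (e^δ - 1) x)`. By convexity of `exp`, `e^{δx}` lies below its chord
`1 + (e^δ - 1) x` on `[0, 1]`, so `x ≤ g δ x`; summing over the simplex gives the lower bound.
Monotonicity gives `g δ x ≤ g δ 1 = 1`, and `g δ 0 = 0`, so only the nonzero coordinates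
contribute, each at most `1`.
-/

open Finset Real

noncomputable def sparsitySurrogate (δ x : ℝ) : ℝ :=
  δ⁻¹ * log (1 + (exp δ - 1) * x)

theorem exp_mul_le_one_add_exp_sub_one_mul {δ x : ℝ} (hx0 : 0 ≤ x) (hx1 : x ≤ 1) :
    exp (δ * x) ≤ 1 + (exp δ - 1) * x := by
  have h := convexOn_exp.2 (Set.mem_univ 0) (Set.mem_univ δ) (sub_nonneg.2 hx1) hx0
    (sub_add_cancel 1 x)
  simp only [smul_eq_mul, mul_zero, zero_add, exp_zero, mul_one] at h
  rw [mul_comm] at h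
  linarith

theorem one_add_exp_sub_one_mul_pos {δ x : ℝ} (hδ : 0 < δ) (hx0 : 0 ≤ x) :
    0 < 1 + (exp δ - 1) * x := by
  have : 0 < exp δ - 1 := sub_pos.2 (one_lt_exp_iff.2 hδ)
  positivity

@[simp]
theorem sparsitySurrogate_zero (δ : ℝ) : sparsitySurrogate δ 0 = 0 := by
  simp [sparsitySurrogate]

theorem self_le_sparsitySurrogate {δ x : ℝ} (hδ : 0 < δ) (hx0 : 0 ≤ x) (hx1 : x ≤ 1) :
    x ≤ sparsitySurrogate δ x := by
  rw [sparsitySurrogate, le_inv_mul_iff₀ hδ, le_log_iff_exp_le (one_add_exp_sub_one_mul_pos hδ hx0)]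
  exact exp_mul_le_one_add_exp_sub_one_mul hx0 hx1

theorem sparsitySurrogate_le_one {δ x : ℝ} (hδ : 0 < δ) (hx0 : 0 ≤ x) (hx1 : x ≤ 1) :
    sparsitySurrogate δ x ≤ 1 := by
  rw [sparsitySurrogate, inv_mul_le_iff₀ hδ, mul_one,
    log_le_iff_le_exp (one_add_exp_sub_one_mul_pos hδ hx0)]
  nlinarith [one_lt_exp_iff.2 hδ]

theorem Finset.sum_comp_le_card_filter_ne_zero {ι : Type*} [Fintype ι] (φ : ℝ → ℝ) (hφ : φ 0 = 0)
    (Ψ : ι → ℝ) (h : ∀ i, Ψ i ≠ 0 → φ (Ψ i) ≤ 1) :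
    ∑ i, φ (Ψ i) ≤ #{i | Ψ i ≠ 0} := by
  rw [← sum_filter_of_ne fun i _ => mt fun (hΨ : Ψ i = 0) => by rw [hΨ, hφ]]
  simpa using sum_le_card_nsmul _ _ 1 fun i hi => h i (mem_filter.1 hi).2

theorem surrogate_between_one_and_l0_general (D : ℕ) (δ : ℝ) (hδ : 0 < δ)
    (Ψ : Fin D → ℝ) (hnn : ∀ d, 0 ≤ Ψ d) (hsum : ∑ d, Ψ d = 1) :
    1 ≤ ∑ d, δ⁻¹ * Real.log (1 + (Real.exp δ - 1) * Ψ d) ∧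
    ∑ d, δ⁻¹ * Real.log (1 + (Real.exp δ - 1) * Ψ d) ≤
      ((Finset.univ.filter (fun d => Ψ d ≠ 0)).card : ℝ) := by
  have hIcc := mem_Icc_of_mem_stdSimplex (show Ψ ∈ stdSimplex ℝ (Fin D) from ⟨hnn, hsum⟩)
  constructor
  · calc 1 = ∑ d, Ψ d := hsum.symm
      _ ≤ ∑ d, sparsitySurrogate δ (Ψ d) :=
        sum_le_sum fun d _ => self_le_sparsitySurrogate hδ (hIcc d).1 (hIcc d).2
  · exact sum_comp_le_card_filter_ne_zero (sparsitySurrogate δ) (sparsitySurrogate_zero δ) Ψ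
      fun d _ => sparsitySurrogate_le_one hδ (hIcc d).1 (hIcc d).2

/-- For any `Ψ` in the probability simplex on `D` coordinates and any `δ > 0`,
`1 ≤ ∑_d (1/δ) ln(1 + (e^δ − 1) Ψ_d) ≤ ‖Ψ‖₀`. -/
theorem surrogate_between_one_and_l0 (D : ℕ) (hD : 0 < D) (δ : ℝ) (hδ : 0 < δ)
    (Ψ : Fin D → ℝ) (hnn : ∀ d, 0 ≤ Ψ d) (hsum : ∑ d, Ψ d = 1) :
    1 ≤ ∑ d, δ⁻¹ * Real.log (1 + (Real.exp δ - 1) * Ψ d) ∧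
    ∑ d, δ⁻¹ * Real.log (1 + (Real.exp δ - 1) * Ψ d) ≤
      ((Finset.univ.filter (fun d => Ψ d ≠ 0)).card : ℝ) :=
  surrogate_between_one_and_l0_general D δ hδ Ψ hnn hsum
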